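/- Let (w_m)_{m ≥ 1} be any orthonormal (Hilbert) basis of the complex Hilbert space L²(ℝ) indexed by the positive integers, and for integers n ≥ 1 and 0 ≤ k ≤ n−1 define h_{n,k} = (1/√n) ∑_{l=0}^{n−1} ( cos(2πkl/n) + sin(2πkl/n) ) w_{n(n−1)/2 + l + 1} ∈ L²(ℝ). Then for every n ≥ 1 and 0 ≤ k ≤ n−1, the sum of the absolute values of the basis coefficients of h_{n,k} satisfies ∑_{m=1}^∞ |⟨h_{n,k}, w_m⟩| = (1/√n) ∑_{l=0}^{n−1} | cos(2πkl/n) + sin(2πkl/n) | ≥ √(n/2). -/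

import Mathlib

open scoped BigOperators ENNReal ComplexOrder InnerProductSpace
open MeasureTheory

/-- The complex Hilbert space `L²(ℝ)`. -/
noncomputable abbrev L2R : Type := Lp ℂ 2 (volume : Measure ℝ)

/-- Given vectors `(w_m)` (indexed by `ℕ`, with `w m` playing the role of `w_{m+1}`), the vector
`h_{n,k} = (1/√n) ∑_{l=0}^{n-1} (cos(2πkl/n) + sin(2πkl/n)) w_{n(n-1)/2 + l + 1} ∈ L²(ℝ)`. -/
noncomputable def hvec (w : ℕ → L2R) (n k : ℕ) : L2R :=
  ((1 / Real.sqrt n : ℝ) : ℂ) • ∑ l ∈ Finset.range n,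
    ((Real.cos (2 * Real.pi * k * l / n) + Real.sin (2 * Real.pi * k * l / n) : ℝ) : ℂ) •
      w (n * (n - 1) / 2 + l)

/-- The eigenvalue `λ_{n,k} = (1/n³)(1 + k/nᵖ)`. -/
noncomputable def lam (p : ℝ) (n k : ℕ) : ℝ := (1 / (n : ℝ) ^ 3) * (1 + (k : ℝ) / (n : ℝ) ^ p)

/-- The rank-one operator `v ⊗ v̄ : f ↦ ⟨f, v⟩ v` (with `⟨f, v⟩ = ∫ f conj v`). -/
noncomputable def rankOneC {H : Type*} [NormedAddCommGroup H] [InnerProductSpace ℂ H]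
    (v : H) : H →L[ℂ] H := (innerSL ℂ v).smulRight v

/-! The coefficients of `h_{n,k}` in the basis are exactly `c_l / √n`, where
`c_l = cos(2πkl/n) + sin(2πkl/n)`, so the first claim is a computation. For the bound,
`c_l² = 1 + sin(4πkl/n)` and the sines sum to zero over a full period (imaginary part of a
geometric sum of `n`-th roots of unity), so `∑ c_l² = n`; since `|c_l| ≤ √2`, this gives
`n ≤ √2 ∑ |c_l|`. -/

section

variable {𝕜 E : Type*} [RCLike 𝕜] [NormedAddCommGroup E] [InnerProductSpace 𝕜 E]

theorem Orthonormal.tsum_norm_inner_sum_smul_comp {ι κ : Type*} {v : ι → E}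
    (hv : Orthonormal 𝕜 v) {e : κ → ι} (he : Function.Injective e) (s : Finset κ) (c : κ → 𝕜) :
    ∑' m, ‖⟪∑ j ∈ s, c j • v (e j), v m⟫_𝕜‖ = ∑ j ∈ s, ‖c j‖ := by
  have hzero : ∀ m ∉ s.map ⟨e, he⟩, ‖⟪∑ j ∈ s, c j • v (e j), v m⟫_𝕜‖ = 0 := by
    intro m hm
    rw [sum_inner, norm_eq_zero]
    refine Finset.sum_eq_zero fun j hj => ?_
    have hne : e j ≠ m := fun h => hm (Finset.mem_map.2 ⟨j, hj, h⟩)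
    rw [inner_smul_left, hv.inner_eq_zero hne, mul_zero]
  rw [tsum_eq_sum hzero, Finset.sum_map]
  refine Finset.sum_congr rfl fun j hj => ?_
  simpa using congrArg norm ((hv.comp e he).inner_left_sum c hj)

end

theorem Real.sum_range_sin_two_pi_mul_div (n : ℕ) (j : ℤ) :
    ∑ l ∈ Finset.range n, Real.sin (2 * Real.pi * j * l / n) = 0 := by
  rcases Nat.eq_zero_or_pos n with rfl | hn
  · simp
  set z : ℂ := Complex.exp (2 * Real.pi * j / n * Complex.I)
  have hpow : ∀ l : ℕ, z ^ l = Complex.exp ((2 * Real.pi * j * l / n : ℝ) * Complex.I) := by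
    intro l
    rw [← Complex.exp_nat_mul]
    push_cast
    ring_nf
  have hzn : z ^ n = 1 := by
    rw [hpow, ← Complex.exp_int_mul_two_pi_mul_I j]
    congr 1
    push_cast
    field_simp
  have him : (∑ l ∈ Finset.range n, z ^ l).im = 0 := by
    rcases eq_or_ne z 1 with h | h
    · simp [h]
    · simp [geom_sum_eq h, hzn]
  rw [← him, Complex.im_sum]
  simp only [hpow, Complex.exp_ofReal_mul_I_im]

theorem Real.cos_add_sin_sq (x : ℝ) : (Real.cos x + Real.sin x) ^ 2 = 1 + Real.sin (2 * x) := by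
  rw [Real.sin_two_mul, ← Real.cos_sq_add_sin_sq x]
  ring

theorem Real.abs_cos_add_sin_le (x : ℝ) : |Real.cos x + Real.sin x| ≤ Real.sqrt 2 := by
  rw [← Real.sqrt_sq_eq_abs]
  refine Real.sqrt_le_sqrt ?_
  nlinarith [Real.cos_sq_add_sin_sq x, sq_nonneg (Real.cos x - Real.sin x)]

theorem Finset.sum_sq_le_mul_sum_abs {ι : Type*} (s : Finset ι) (a : ι → ℝ) {M : ℝ}
    (hM : ∀ i ∈ s, |a i| ≤ M) : ∑ i ∈ s, a i ^ 2 ≤ M * ∑ i ∈ s, |a i| := by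
  rw [Finset.mul_sum]
  refine Finset.sum_le_sum fun i hi => ?_
  rw [← sq_abs, sq]
  exact mul_le_mul_of_nonneg_right (hM i hi) (abs_nonneg _)

theorem sum_range_cos_add_sin_sq (n k : ℕ) :
    ∑ l ∈ Finset.range n,
      (Real.cos (2 * Real.pi * k * l / n) + Real.sin (2 * Real.pi * k * l / n)) ^ 2 = n := by
  have h := Real.sum_range_sin_two_pi_mul_div n (2 * k)
  push_cast at h
  simp only [Real.cos_add_sin_sq, Finset.sum_add_distrib, Finset.sum_const, Finset.card_range]
  have hsin : ∀ x : ℝ, Real.sin (2 * (2 * Real.pi * k * x / n)) =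
      Real.sin (2 * Real.pi * (2 * k) * x / n) := fun x => by ring_nf
  simp [hsin, h]

theorem Real.sqrt_div_two_le_of_le_sqrt_two_mul {x S : ℝ} (hx : 0 ≤ x) (h : x ≤ Real.sqrt 2 * S) :
    Real.sqrt (x / 2) ≤ 1 / Real.sqrt x * S := by
  rcases hx.eq_or_lt with rfl | hx
  · simp
  have hs : 0 < Real.sqrt x := Real.sqrt_pos.2 hx
  rw [Real.sqrt_div hx.le, one_div_mul_eq_div, div_le_div_iff₀ (by positivity) hs,
    Real.mul_self_sqrt hx.le]
  linarith

theorem hvec_eq_sum_smul (w : ℕ → L2R) (n k : ℕ) :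
    hvec w n k = ∑ l ∈ Finset.range n,
      ((1 / Real.sqrt n * (Real.cos (2 * Real.pi * k * l / n) +
        Real.sin (2 * Real.pi * k * l / n)) : ℝ) : ℂ) • w (n * (n - 1) / 2 + l) := by
  simp only [hvec, Finset.smul_sum, smul_smul, Complex.ofReal_mul]

theorem hvec_coefficient_l1_norm_general (w : HilbertBasis ℕ ℂ L2R) (n k : ℕ) :
    (∑' m : ℕ, ‖⟪hvec (fun m => w m) n k, w m⟫_ℂ‖) =
        (1 / Real.sqrt n) * ∑ l ∈ Finset.range n,
          |Real.cos (2 * Real.pi * k * l / n) + Real.sin (2 * Real.pi * k * l / n)| ∧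
      Real.sqrt (n / 2) ≤ ∑' m : ℕ, ‖⟪hvec (fun m => w m) n k, w m⟫_ℂ‖ := by
  have hcoeff : (∑' m : ℕ, ‖⟪hvec (fun m => w m) n k, w m⟫_ℂ‖) =
      (1 / Real.sqrt n) * ∑ l ∈ Finset.range n,
        |Real.cos (2 * Real.pi * k * l / n) + Real.sin (2 * Real.pi * k * l / n)| := by
    rw [hvec_eq_sum_smul, w.orthonormal.tsum_norm_inner_sum_smul_comp (add_right_injective _),
      Finset.mul_sum]
    simp only [Complex.norm_real, Real.norm_eq_abs, abs_mul, abs_of_nonneg (by positivity :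
      0 ≤ 1 / Real.sqrt n)]
  refine ⟨hcoeff, hcoeff ▸ Real.sqrt_div_two_le_of_le_sqrt_two_mul n.cast_nonneg ?_⟩
  calc (n : ℝ) = _ := (sum_range_cos_add_sin_sq n k).symm
    _ ≤ _ := Finset.sum_sq_le_mul_sum_abs _ _ fun l _ => Real.abs_cos_add_sin_le _

theorem hvec_coefficient_l1_norm (w : HilbertBasis ℕ ℂ L2R) (n k : ℕ)
    (hn : 1 ≤ n) (hk : k ≤ n - 1) :
    (∑' m : ℕ, ‖⟪hvec (fun m => w m) n k, w m⟫_ℂ‖) =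
        (1 / Real.sqrt n) * ∑ l ∈ Finset.range n,
          |Real.cos (2 * Real.pi * k * l / n) + Real.sin (2 * Real.pi * k * l / n)| ∧
      Real.sqrt (n / 2) ≤ ∑' m : ℕ, ‖⟪hvec (fun m => w m) n k, w m⟫_ℂ‖ :=
  hvec_coefficient_l1_norm_general w n k
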